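/- arXiv:2106.05944 — 2 statements merged into one kernel-verified Lean document; each statement's English description precedes it below -/
import Mathlib

section
/- Let I be a nonempty proper arc of [n], say I = {(a+t) mod n : 0 ≤ t ≤ k} with 0 ≤ k ≤ n−2, with borders a and b = (a+k) mod n, and let a′ = (a−1) mod n and b′ = (b+1) mod n be the borders of the complementary arc Iᶜ (so that a and a′ are consecutive, and b and b′ are consecutive, in the cyclic order). Let J ⊆ [n] be an arc. Then I ⋔* J if and only if either ({a, a′} ⊆ J and {b, b′} ⊆ Jᶜ) or ({b, b′} ⊆ J and {a, a′} ⊆ Jᶜ). -/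
open Fin.NatCast

/-- The arc `{a, a+1, …, a+k}` (mod `n`) of `Fin n`. -/
def arcSet (n : ℕ) [NeZero n] (a : Fin n) (k : ℕ) : Set (Fin n) :=
  {x | ∃ t : ℕ, t ≤ k ∧ x = a + (t : Fin n)}

/-- `A` is an arc of `Fin n`. -/
def IsArc (n : ℕ) [NeZero n] (A : Set (Fin n)) : Prop :=
  A.Nonempty ∧ ∃ (a : Fin n) (k : ℕ), k ≤ n - 1 ∧ A = arcSet n a k

/-- Two arcs strictly overlap. -/
def StrictOverlap {n : ℕ} (I J : Set (Fin n)) : Prop :=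
  ¬ I ⊆ J ∧ ¬ J ⊆ I ∧ ¬ Iᶜ ⊆ J ∧ ¬ J ⊆ Iᶜ

/-
Call `x` a cut of `S` when exactly one of `x`, `x + 1` lies in `S`. The arc `{c, …, c + m}` can only
be cut at `c - 1` and at `c + m`, so an arc has at most two cuts. If `I` and `J` strictly overlap, then
membership in `J` changes inside `I` and inside `Iᶜ`, which produces one cut of `J` strictly inside
each of them. Hence neither `a - 1` nor `b` is a cut of `J`, and `a`, `b` lie on different sides of
`J`, for otherwise `I` would contain a second cut. Conversely, the four border points witness the four
non-inclusions.
-/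

theorem strictOverlap_of_mem_of_not_mem {n : ℕ} {I J : Set (Fin n)} {x x' y y' : Fin n}
    (hxI : x ∈ I) (hx'I : x' ∉ I) (hyI : y ∈ I) (hy'I : y' ∉ I)
    (hxJ : x ∈ J) (hx'J : x' ∈ J) (hyJ : y ∉ J) (hy'J : y' ∉ J) : StrictOverlap I J :=
  ⟨fun h => hyJ (h hyI), fun h => hx'I (h hx'J), fun h => hy'J (h hy'I), fun h => h hxJ hxI⟩

theorem Nat.exists_not_iff_succ_of_not_iff {P : ℕ → Prop} {i j : ℕ} (hij : i ≤ j)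
    (h : ¬(P i ↔ P j)) : ∃ t, i ≤ t ∧ t < j ∧ ¬(P t ↔ P (t + 1)) := by
  induction j, hij using Nat.le_induction with
  | base => exact absurd Iff.rfl h
  | succ j hij ih =>
    by_cases hj : P j ↔ P (j + 1)
    · obtain ⟨t, hit, htj, ht⟩ := ih fun h' => h (h'.trans hj)
      exact ⟨t, hit, by omega, ht⟩
    · exact ⟨j, hij, by omega, hj⟩

variable {n : ℕ} [NeZero n]

theorem exists_natCast_offset (a : Fin n) {Q : Fin n → Prop} (h : ∃ x, Q x) :
    ∃ t < n, Q (a + (t : Fin n)) := by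
  obtain ⟨x, hx⟩ := h
  exact ⟨(x - a).val, (x - a).isLt, by rwa [Fin.cast_val_eq_self, add_sub_cancel]⟩

theorem sub_one_eq_add_natCast (a : Fin n) : a - 1 = a + ((n - 1 : ℕ) : Fin n) := by
  refine (eq_sub_of_add_eq ?_).symm
  rw [add_assoc, ← Nat.cast_add_one, Nat.sub_add_cancel NeZero.one_le, Fin.natCast_self, add_zero]

theorem mem_arcSet_iff {a x : Fin n} {k : ℕ} : x ∈ arcSet n a k ↔ (x - a).val ≤ k := by
  constructor
  · rintro ⟨t, ht, rfl⟩
    rw [add_sub_cancel_left, Fin.val_natCast]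
    exact (Nat.mod_le t n).trans ht
  · intro h
    exact ⟨(x - a).val, h, by rw [Fin.cast_val_eq_self, add_sub_cancel]⟩

theorem add_natCast_mem_arcSet_iff {a : Fin n} {k t : ℕ} (ht : t < n) :
    a + (t : Fin n) ∈ arcSet n a k ↔ t ≤ k := by
  rw [mem_arcSet_iff, add_sub_cancel_left, Fin.val_natCast, Nat.mod_eq_of_lt ht]

def IsCut (S : Set (Fin n)) (x : Fin n) : Prop :=
  ¬(x ∈ S ↔ x + 1 ∈ S)

theorem exists_isCut_of_not_iff {S : Set (Fin n)} {a : Fin n} {l r i j : ℕ}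
    (hi : i ∈ Set.Icc l r) (hj : j ∈ Set.Icc l r)
    (h : ¬(a + (i : Fin n) ∈ S ↔ a + (j : Fin n) ∈ S)) :
    ∃ t ∈ Set.Ico l r, IsCut S (a + (t : Fin n)) := by
  have key : ∀ {i j : ℕ}, i ≤ j → ¬(a + (i : Fin n) ∈ S ↔ a + (j : Fin n) ∈ S) →
      ∃ t, i ≤ t ∧ t < j ∧ IsCut S (a + (t : Fin n)) := fun hij h => by
    simpa only [IsCut, Nat.cast_add_one, add_assoc] using
      Nat.exists_not_iff_succ_of_not_iff (P := fun t => a + (t : Fin n) ∈ S) hij h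
  rcases le_total i j with hij | hji
  · obtain ⟨t, hit, htj, ht⟩ := key hij h
    exact ⟨t, ⟨hi.1.trans hit, htj.trans_le hj.2⟩, ht⟩
  · obtain ⟨t, hjt, hti, ht⟩ := key hji (fun h' => h h'.symm)
    exact ⟨t, ⟨hj.1.trans hjt, hti.trans_le hi.2⟩, ht⟩

theorem isCut_arcSet {c x : Fin n} {m : ℕ} (h : IsCut (arcSet n c m) x) :
    (x - c).val = m ∨ (x - c).val = n - 1 := by
  rw [IsCut, mem_arcSet_iff, mem_arcSet_iff, add_sub_right_comm, Fin.val_add, Fin.val_one',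
    Nat.add_mod_mod] at h
  have hx := (x - c).isLt
  rcases Nat.lt_or_ge ((x - c).val + 1) n with hlt | hge
  · rw [Nat.mod_eq_of_lt hlt] at h
    omega
  · omega

theorem arcSet_not_three_cuts {a c : Fin n} {m t₁ t₂ t₃ : ℕ} (h₁₂ : t₁ < t₂) (h₂₃ : t₂ < t₃)
    (h₃ : t₃ < n) (hc₁ : IsCut (arcSet n c m) (a + (t₁ : Fin n)))
    (hc₂ : IsCut (arcSet n c m) (a + (t₂ : Fin n)))
    (hc₃ : IsCut (arcSet n c m) (a + (t₃ : Fin n))) : False := by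
  have hne : ∀ {s t : ℕ}, s < t → t < n →
      (a + (s : Fin n) - c).val ≠ (a + (t : Fin n) - c).val := fun hst htn heq => by
    have := congrArg Fin.val (add_left_cancel (sub_left_inj.mp (Fin.val_injective heq)))
    rw [Fin.val_natCast, Fin.val_natCast, Nat.mod_eq_of_lt (hst.trans htn),
      Nat.mod_eq_of_lt htn] at this
    omega
  have := hne h₁₂ (h₂₃.trans h₃)
  have := hne h₂₃ h₃
  have := hne (h₁₂.trans h₂₃) h₃
  have := isCut_arcSet hc₁
  have := isCut_arcSet hc₂
  have := isCut_arcSet hc₃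
  omega

theorem arcSet_borders {a : Fin n} {k : ℕ} (hk : k + 1 < n) :
    a ∈ arcSet n a k ∧ a - 1 ∉ arcSet n a k ∧ a + (k : Fin n) ∈ arcSet n a k ∧
      a + (k : Fin n) + 1 ∉ arcSet n a k := by
  rw [sub_one_eq_add_natCast, add_assoc, ← Nat.cast_add_one, add_natCast_mem_arcSet_iff (by omega),
    add_natCast_mem_arcSet_iff (by omega), add_natCast_mem_arcSet_iff hk]
  exact ⟨⟨0, Nat.zero_le k, by simp⟩, by omega, le_rfl, by omega⟩

theorem exists_not_iff_of_strictOverlap {a : Fin n} {k : ℕ} {J : Set (Fin n)}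
    (h : StrictOverlap (arcSet n a k) J) :
    (∃ i ∈ Set.Icc 0 k, ∃ i' ∈ Set.Icc 0 k, ¬(a + (i : Fin n) ∈ J ↔ a + (i' : Fin n) ∈ J)) ∧
      ∃ j ∈ Set.Icc (k + 1) (n - 1), ∃ j' ∈ Set.Icc (k + 1) (n - 1),
        ¬(a + (j : Fin n) ∈ J ↔ a + (j' : Fin n) ∈ J) := by
  obtain ⟨hIJ, hJI, hIcJ, hJIc⟩ := h
  obtain ⟨i, hin, hiI, hiJ⟩ := exists_natCast_offset a (Set.not_subset.mp hIJ)
  obtain ⟨i', hi'n, hi'J, hi'I⟩ := exists_natCast_offset a (Set.not_subset.mp hJIc)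
  obtain ⟨j, hjn, hjI, hjJ⟩ := exists_natCast_offset a (Set.not_subset.mp hIcJ)
  obtain ⟨j', hj'n, hj'J, hj'I⟩ := exists_natCast_offset a (Set.not_subset.mp hJI)
  rw [add_natCast_mem_arcSet_iff hin] at hiI
  rw [Set.mem_compl_iff, not_not, add_natCast_mem_arcSet_iff hi'n] at hi'I
  rw [Set.mem_compl_iff, add_natCast_mem_arcSet_iff hjn] at hjI
  rw [add_natCast_mem_arcSet_iff hj'n] at hj'I
  exact ⟨⟨i, ⟨Nat.zero_le i, hiI⟩, i', ⟨Nat.zero_le i', hi'I⟩, fun h => hiJ (h.mpr hi'J)⟩,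
    j, ⟨by omega, by omega⟩, j', ⟨by omega, by omega⟩, fun h => hjJ (h.mpr hj'J)⟩

theorem borders_of_strictOverlap {a c : Fin n} {k m : ℕ}
    (h : StrictOverlap (arcSet n a k) (arcSet n c m)) :
    (a - 1 ∈ arcSet n c m ↔ a ∈ arcSet n c m) ∧
      (a + (k : Fin n) ∈ arcSet n c m ↔ a + (k : Fin n) + 1 ∈ arcSet n c m) ∧
      ¬(a ∈ arcSet n c m ↔ a + (k : Fin n) ∈ arcSet n c m) := by
  set J := arcSet n c m
  obtain ⟨⟨i, hi, i', hi', hii'⟩, j, hj, j', hj', hjj'⟩ := exists_not_iff_of_strictOverlap h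
  obtain ⟨t₁, ⟨-, ht₁k⟩, hcut₁⟩ := exists_isCut_of_not_iff hi hi' hii'
  obtain ⟨t₂, ⟨hkt₂, ht₂n⟩, hcut₂⟩ := exists_isCut_of_not_iff hj hj' hjj'
  refine ⟨?_, ?_, ?_⟩
  · by_contra ha
    have hcut : IsCut J (a + ((n - 1 : ℕ) : Fin n)) := by
      rwa [← sub_one_eq_add_natCast, IsCut, sub_add_cancel]
    exact arcSet_not_three_cuts (by omega) ht₂n (by omega) hcut₁ hcut₂ hcut
  · by_contra hb
    exact arcSet_not_three_cuts (t₂ := k) ht₁k (by omega) (by omega) hcut₁ hb hcut₂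
  · intro hab
    obtain ⟨i₀, hi₀, hi₀a⟩ :
        ∃ i₀ ∈ Set.Icc 0 k, ¬(a + ((0 : ℕ) : Fin n) ∈ J ↔ a + (i₀ : Fin n) ∈ J) := by
      rw [Nat.cast_zero, add_zero]
      by_cases ha : a ∈ J ↔ a + (i : Fin n) ∈ J
      exacts [⟨i', hi', fun h => hii' (ha.symm.trans h)⟩, ⟨i, hi, ha⟩]
    obtain ⟨s₁, ⟨-, hs₁⟩, hcut₁'⟩ := exists_isCut_of_not_iff ⟨le_rfl, Nat.zero_le _⟩
      ⟨Nat.zero_le _, le_rfl⟩ hi₀a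
    rw [Nat.cast_zero, add_zero] at hi₀a
    obtain ⟨s₂, ⟨hs₂, hs₂k⟩, hcut₂'⟩ := exists_isCut_of_not_iff ⟨le_rfl, hi₀.2⟩
      ⟨hi₀.2, le_rfl⟩ fun h => hi₀a (hab.trans h.symm)
    exact arcSet_not_three_cuts (hs₁.trans_le hs₂) (by omega) (by omega) hcut₁' hcut₂' hcut₂

/-- An arc `I` with borders `a` and `b = a + k` strictly overlaps an arc `J` iff
`J` contains exactly one of the two pairs of consecutive border elements
`{a, a-1}` and `{b, b+1}` and avoids the other. -/
theorem statement8 (n : ℕ) [NeZero n] (a : Fin n) (k : ℕ) (hk : k ≤ n - 2)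
    (J : Set (Fin n)) (hJ : IsArc n J) :
    StrictOverlap (arcSet n a k) J ↔
      ((({a, a - 1} : Set (Fin n)) ⊆ J ∧
          ({a + (k : Fin n), a + (k : Fin n) + 1} : Set (Fin n)) ⊆ Jᶜ) ∨
       (({a + (k : Fin n), a + (k : Fin n) + 1} : Set (Fin n)) ⊆ J ∧
          ({a, a - 1} : Set (Fin n)) ⊆ Jᶜ)) := by
  obtain ⟨-, c, m, -, rfl⟩ := hJ
  simp only [Set.insert_subset_iff, Set.singleton_subset_iff, Set.mem_compl_iff]
  constructor
  · intro h
    obtain ⟨ha, hb, hab⟩ := borders_of_strictOverlap h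
    tauto
  · intro hborders
    have : Nontrivial (Fin n) := by
      obtain ⟨⟨ha, -⟩, hb, -⟩ | ⟨⟨hb, -⟩, ha, -⟩ := hborders
      exacts [nontrivial_of_ne _ _ (ne_of_mem_of_not_mem ha hb),
        nontrivial_of_ne _ _ (ne_of_mem_of_not_mem hb ha)]
    obtain ⟨haI, ha'I, hbI, hb'I⟩ :=
      arcSet_borders (a := a) (k := k) (by have := Fin.nontrivial_iff_two_le.mp this; omega)
    obtain ⟨⟨ha, ha'⟩, hb, hb'⟩ | ⟨⟨hb, hb'⟩, ha, ha'⟩ := hborders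
    · exact strictOverlap_of_mem_of_not_mem haI ha'I hbI hb'I ha ha' hb hb'
    · exact strictOverlap_of_mem_of_not_mem hbI hb'I haI ha'I hb hb' ha ha'
end

section
/- Let D be an n×n strict circular Robinson dissimilarity matrix and let I = {(a+t) mod n : 0 ≤ t ≤ k} with 0 ≤ k ≤ n−2 be a nonempty proper arc of [n] with borders a and b = (a+k) mod n. Then for every i ∈ Iᶜ, every minimizer of j ↦ D(i,j) over j ∈ I is contained in {a, b}. -/
open Fin.NatCast

/-- The standard cyclic order on `Fin n`. -/
def CycOrd {n : ℕ} (i j k : Fin n) : Prop :=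
  (i < j ∧ j < k) ∨ (j < k ∧ k < i) ∨ (k < i ∧ i < j)

/-- `i,j,k,l` are pairwise distinct and cyclically ordered. -/
def CycOrd4 {n : ℕ} (i j k l : Fin n) : Prop :=
  i ≠ j ∧ i ≠ k ∧ i ≠ l ∧ j ≠ k ∧ j ≠ l ∧ k ≠ l ∧ CycOrd i j k ∧ CycOrd i k l

/-- `D` is a dissimilarity matrix. -/
def IsDissim {n : ℕ} (D : Fin n → Fin n → ℝ) : Prop :=
  (∀ i j, D i j = D j i) ∧ (∀ i j, 0 ≤ D i j) ∧ (∀ i, D i i = 0)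

/-- `D` is a circular Robinson matrix. -/
def CircRobinson {n : ℕ} (D : Fin n → Fin n → ℝ) : Prop :=
  ∀ i j k l : Fin n, CycOrd4 i j k l → min (D j k) (D k l) ≤ D i k

/-- `D` is a strict circular Robinson matrix. -/
def StrictCircRobinson {n : ℕ} (D : Fin n → Fin n → ℝ) : Prop :=
  ∀ i j k l : Fin n, CycOrd4 i j k l → min (D j k) (D k l) < D i k

open Classical in
/-- The permutation of `Fin n` reversing the arc `{a, …, a+k}`. -/
noncomputable def arcRev (n : ℕ) [NeZero n] (a : Fin n) (k : ℕ) (x : Fin n) : Fin n :=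
  if (∃ t : ℕ, t ≤ k ∧ x = a + (t : Fin n)) then a + (k : Fin n) - (x - a) else x

/-!
If `j` is an interior point of the arc, both neighbours `j + 1` and `j - 1` lie in the arc, and
for `i` outside the arc the points `j, j + 1, i, j - 1` are cyclically ordered. The strict
circular Robinson inequality then gives `min (D i (j + 1)) (D i (j - 1)) < D i j`, so `j` is not
a minimizer.
-/

theorem cycOrd_of_val_sub_lt {n : ℕ} {i j k : Fin n} (hj : 0 < (j - i).val)
    (hjk : (j - i).val < (k - i).val) : CycOrd i j k := by
  unfold CycOrd
  simp only [Fin.lt_def]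
  rcases le_or_gt i j with hij | hij <;> rcases le_or_gt i k with hik | hik <;>
    simp only [Fin.sub_val_of_le, Fin.coe_sub_iff_lt.2, *] at hj hjk <;>
    simp only [Fin.le_def, Fin.lt_def] at hij hik <;> omega

theorem cycOrd4_of_val_sub_lt {n : ℕ} {i j k l : Fin n} (hj : 0 < (j - i).val)
    (hjk : (j - i).val < (k - i).val) (hkl : (k - i).val < (l - i).val) :
    CycOrd4 i j k l := by
  have hne : ∀ x y : Fin n, (x - i).val ≠ (y - i).val → x ≠ y := by
    rintro x y h rfl; exact h rfl
  have hi : ∀ x : Fin n, 0 < (x - i).val → i ≠ x := by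
    rintro x h rfl; rw [Fin.sub_val_of_le le_rfl, Nat.sub_self] at h; exact h.false
  exact ⟨hi j hj, hi k (by omega), hi l (by omega), hne j k hjk.ne, hne j l (by omega),
    hne k l hkl.ne, cycOrd_of_val_sub_lt hj hjk, cycOrd_of_val_sub_lt (by omega) hkl⟩

theorem Fin.one_lt_val_lt_of_ne {n : ℕ} {x : Fin (n + 1)} (h0 : x ≠ 0) (h1 : x ≠ 1)
    (hm1 : x ≠ -1) : 1 < x.val ∧ x.val < n := by
  have := x.isLt
  rw [Ne, Fin.ext_iff, Fin.val_zero] at h0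
  rcases n with _ | n
  · omega
  rw [Ne, Fin.ext_iff, Fin.val_one] at h1
  rw [Ne, Fin.ext_iff, Fin.coe_neg_one] at hm1
  omega

theorem StrictCircRobinson.min_neighbors_lt {n : ℕ} [NeZero n] {D : Fin n → Fin n → ℝ}
    (hR : StrictCircRobinson D) {i j : Fin n} (h0 : i ≠ j) (h1 : i ≠ j + 1) (h2 : i ≠ j - 1) :
    min (D (j + 1) i) (D i (j - 1)) < D j i := by
  obtain ⟨m, rfl⟩ : ∃ m, n = m + 1 := Nat.exists_eq_succ_of_ne_zero (NeZero.ne n)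
  obtain ⟨hlo, hhi⟩ := Fin.one_lt_val_lt_of_ne (x := i - j) (sub_ne_zero.2 h0)
    (fun h => h1 (sub_eq_iff_eq_add'.1 h))
    (fun h => h2 (by rw [sub_eq_iff_eq_add'.1 h, sub_eq_add_neg]))
  have hone : ((j + 1 - j : Fin (m + 1)) : ℕ) = 1 := by
    rw [add_sub_cancel_left, Fin.val_one', Nat.mod_eq_of_lt (by omega)]
  have hneg : ((j - 1 - j : Fin (m + 1)) : ℕ) = m := by
    rw [sub_sub_cancel_left, Fin.coe_neg_one]
  exact hR _ _ _ _ (cycOrd4_of_val_sub_lt (by omega) (by omega) (by omega))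

theorem statement12_general (n : ℕ) [NeZero n] (D : Fin n → Fin n → ℝ)
    (hD : IsDissim D) (hR : StrictCircRobinson D)
    (a : Fin n) (k : ℕ) :
    ∀ i ∉ arcSet n a k, ∀ j ∈ arcSet n a k,
      (∀ j' ∈ arcSet n a k, D i j ≤ D i j') → j = a ∨ j = a + (k : Fin n) := by
  rintro i hi _ ⟨t, ht_le, rfl⟩ hmin
  by_contra! ⟨hfirst, hlast⟩
  have ht0 : 0 < t := Nat.pos_of_ne_zero (by rintro rfl; simp at hfirst)
  have ht_lt : t < k := ht_le.lt_of_ne (by rintro rfl; exact hlast rfl)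
  have hj : a + (t : Fin n) ∈ arcSet n a k := ⟨t, ht_le, rfl⟩
  have hnext : a + (t : Fin n) + 1 ∈ arcSet n a k :=
    ⟨t + 1, ht_lt, by rw [Nat.cast_succ, add_assoc]⟩
  have hprev : a + (t : Fin n) - 1 ∈ arcSet n a k :=
    ⟨t - 1, by omega, (eq_sub_of_add_eq (by rw [add_assoc, ← Nat.cast_add_one,
      Nat.sub_add_cancel ht0])).symm⟩
  have hlt := hR.min_neighbors_lt (ne_of_mem_of_not_mem hj hi).symm
    (ne_of_mem_of_not_mem hnext hi).symm (ne_of_mem_of_not_mem hprev hi).symm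
  rw [hD.1 _ i, hD.1 (a + t) i] at hlt
  exact hlt.not_ge (le_min (hmin _ hnext) (hmin _ hprev))

/-- For a strict circular Robinson matrix, the dissimilarity from a point outside
an arc to the arc is minimized only at the borders of the arc. -/
theorem statement12 (n : ℕ) [NeZero n] (D : Fin n → Fin n → ℝ)
    (hD : IsDissim D) (hR : StrictCircRobinson D)
    (a : Fin n) (k : ℕ) (hk : k ≤ n - 2) :
    ∀ i ∉ arcSet n a k, ∀ j ∈ arcSet n a k,
      (∀ j' ∈ arcSet n a k, D i j ≤ D i j') → j = a ∨ j = a + (k : Fin n) :=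
  statement12_general n D hD hR a k
end
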